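/- For every n ≥ 1 and every real n-mode tensor T on ℝ² with ‖T‖ = 1 (a real n-qubit state), one has ‖T‖_{∞,ℝ} ≥ 2^{(1-n)/2} and ‖T‖_{1,ℝ} ≤ 2^{(n-1)/2}, and both inequalities are attained (e.g. by the real tensor T_{n,1} = (⊗ⁿu + ⊗ⁿconj(u))/√2 with u = (1,i)ᵀ/√2). In particular, α(2^{×n},ℝ) = 2^{(n-1)/2} and β(2^{×n},ℝ) = 2^{(1-n)/2}. -/

import Mathlib

noncomputable section

/-- The Euclidean norm of a vector in `𝕜^k`. -/
def vnorm {𝕜 : Type*} [RCLike 𝕜] {k : ℕ} (x : Fin k → 𝕜) : ℝ :=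
  Real.sqrt (∑ i, ‖x i‖ ^ 2)

/-- The rank-one tensor `x₁ ⊗ ⋯ ⊗ x_d` on `𝕜^n`. -/
def rankOne {𝕜 : Type*} [RCLike 𝕜] {d n : ℕ} (x : Fin d → Fin n → 𝕜) :
    (Fin d → Fin n) → 𝕜 :=
  fun i => ∏ j, x j (i j)

/-- The standard inner product `⟨T, Y⟩ = ∑ tᵢ · conj yᵢ` of tensors. -/
def tinner {𝕜 : Type*} [RCLike 𝕜] {d n : ℕ} (T Y : (Fin d → Fin n) → 𝕜) : 𝕜 :=
  ∑ i, T i * (starRingEnd 𝕜) (Y i)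

/-- The Hilbert–Schmidt norm of a tensor. -/
def hsNorm {𝕜 : Type*} [RCLike 𝕜] {d n : ℕ} (T : (Fin d → Fin n) → 𝕜) : ℝ :=
  Real.sqrt (∑ i, ‖T i‖ ^ 2)

/-- The spectral norm of a tensor:
`max {|⟨T, x₁⊗⋯⊗x_d⟩| : ‖x_j‖ = 1 for all j}`. -/
def specNorm {𝕜 : Type*} [RCLike 𝕜] {d n : ℕ} (T : (Fin d → Fin n) → 𝕜) : ℝ :=
  sSup {r : ℝ | ∃ x : Fin d → Fin n → 𝕜, (∀ j, vnorm (x j) = 1) ∧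
    r = ‖tinner T (rankOne x)‖}

/-- The nuclear norm of a tensor:
`min {∑ᵢ ∏ⱼ ‖x_{i,j}‖ : T = ∑ᵢ x_{i,1}⊗⋯⊗x_{i,d}}`. -/
def nucNorm {𝕜 : Type*} [RCLike 𝕜] {d n : ℕ} (T : (Fin d → Fin n) → 𝕜) : ℝ :=
  sInf {r : ℝ | ∃ (m : ℕ) (x : Fin m → Fin d → Fin n → 𝕜),
    T = (∑ i, rankOne (x i)) ∧ r = ∑ i, ∏ j, vnorm (x i j)}

/-- `α(n^{×d}, 𝕜)`. -/
def alphaN (𝕜 : Type*) [RCLike 𝕜] (d n : ℕ) : ℝ :=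
  sSup {r : ℝ | ∃ T : (Fin d → Fin n) → 𝕜, hsNorm T = 1 ∧ r = nucNorm T}

/-- `β(n^{×d}, 𝕜)`. -/
def betaN (𝕜 : Type*) [RCLike 𝕜] (d n : ℕ) : ℝ :=
  sInf {r : ℝ | ∃ T : (Fin d → Fin n) → 𝕜, hsNorm T = 1 ∧ r = specNorm T}

/-- The vector `u = (1, i)ᵀ/√2 ∈ ℂ²`. -/
def uvec : Fin 2 → ℂ := fun k =>
  if k = 0 then (Real.sqrt 2 : ℂ)⁻¹ else Complex.I * (Real.sqrt 2 : ℂ)⁻¹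

/-- The real tensor `T_{n,1} = (⊗ⁿu + ⊗ⁿ(conj u))/√2 = √2·Re(⊗ⁿu)` on `ℝ²`. -/
def Tn1 (n : ℕ) : (Fin n → Fin 2) → ℝ := fun i =>
  Real.sqrt 2 * (∏ j, uvec (i j)).re

/-!
Split a tensor `T` on `(ℝᵏ)^{⊗(m+1)}` along its first mode:
`T = ∑_p T(·, p) ⊗ e_{p₁} ⊗ ⋯ ⊗ e_{pₘ}` over the `kᵐ` tuples `p`. Testing `T` against
`T(·, p)/‖T(·, p)‖ ⊗ e_{p₁} ⊗ ⋯ ⊗ e_{pₘ}` shows that every slice has norm at most `‖T‖_∞`, so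
`‖T‖ ≤ k^{m/2} ‖T‖_∞`, and Cauchy–Schwarz bounds the cost of the splitting by `k^{m/2} ‖T‖`.
For `T_{n,1}` one has `⟨T_{n,1}, x₁ ⊗ ⋯ ⊗ xₙ⟩ = √2 Re ∏ⱼ ⟨xⱼ, ū⟩` with `|⟨x, ū⟩| = ‖x‖/√2`,
so `‖T_{n,1}‖_∞ ≤ 2^{(1-n)/2}`; pairing `T_{n,1}` with any rank-one decomposition
of itself then gives `1 ≤ 2^{(1-n)/2} ‖T_{n,1}‖₁`.
-/

namespace RealTensor

open Finset Real

section Basic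

variable {d k : ℕ}

lemma vnorm_sq (x : Fin k → ℝ) : vnorm x ^ 2 = ∑ a, x a ^ 2 := by
  simp [vnorm, Real.sq_sqrt (by positivity : (0 : ℝ) ≤ ∑ a, x a ^ 2)]

lemma hsNorm_sq (T : (Fin d → Fin k) → ℝ) : hsNorm T ^ 2 = ∑ i, T i ^ 2 := by
  simp [hsNorm, Real.sq_sqrt (by positivity : (0 : ℝ) ≤ ∑ i, T i ^ 2)]

lemma hsNorm_nonneg (T : (Fin d → Fin k) → ℝ) : 0 ≤ hsNorm T := Real.sqrt_nonneg _

lemma vnorm_nonneg (x : Fin k → ℝ) : 0 ≤ vnorm x := Real.sqrt_nonneg _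

lemma abs_le_vnorm (x : Fin k → ℝ) (a : Fin k) : |x a| ≤ vnorm x := by
  rw [← Real.sqrt_sq_eq_abs, vnorm]
  gcongr
  simpa using single_le_sum (f := fun b => x b ^ 2) (fun b _ => sq_nonneg _) (mem_univ a)

lemma vnorm_smul (c : ℝ) (x : Fin k → ℝ) : vnorm (c • x) = |c| * vnorm x := by
  simp only [vnorm, Pi.smul_apply, smul_eq_mul, norm_mul, mul_pow, ← mul_sum]
  rw [Real.sqrt_mul (sq_nonneg _), Real.sqrt_sq (norm_nonneg _), Real.norm_eq_abs]

lemma vnorm_single (a : Fin k) : vnorm (Pi.single a (1 : ℝ)) = 1 := by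
  simp [vnorm, Pi.single_apply]

lemma tinner_eq_sum (T Y : (Fin d → Fin k) → ℝ) : tinner T Y = ∑ i, T i * Y i := by
  simp [tinner]

lemma tinner_self (T : (Fin d → Fin k) → ℝ) : tinner T T = hsNorm T ^ 2 := by
  simp only [tinner_eq_sum, hsNorm_sq, ← sq]

lemma tinner_sum {ι : Type*} (s : Finset ι) (T : (Fin d → Fin k) → ℝ)
    (Y : ι → (Fin d → Fin k) → ℝ) : tinner T (∑ a ∈ s, Y a) = ∑ a ∈ s, tinner T (Y a) := by
  simp only [tinner_eq_sum, Finset.sum_apply, mul_sum]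
  exact sum_comm

lemma abs_rankOne_le (x : Fin d → Fin k → ℝ) (i : Fin d → Fin k) :
    |rankOne x i| ≤ ∏ j, vnorm (x j) := by
  rw [rankOne, abs_prod]
  exact prod_le_prod (fun j _ => abs_nonneg _) fun j _ => abs_le_vnorm _ _

end Basic

section Norms

variable {d k : ℕ} (T : (Fin d → Fin k) → ℝ)

lemma specNorm_nonneg : 0 ≤ specNorm T :=
  Real.sSup_nonneg fun _ ⟨_, _, hr⟩ => hr ▸ norm_nonneg _

lemma norm_tinner_le_specNorm {x : Fin d → Fin k → ℝ} (hx : ∀ j, vnorm (x j) = 1) :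
    ‖tinner T (rankOne x)‖ ≤ specNorm T := by
  refine le_csSup ⟨∑ i, |T i|, ?_⟩ ⟨x, hx, rfl⟩
  rintro _ ⟨y, hy, rfl⟩
  rw [tinner_eq_sum, Real.norm_eq_abs]
  refine (abs_sum_le_sum_abs _ _).trans (sum_le_sum fun i _ => ?_)
  rw [abs_mul]
  refine mul_le_of_le_one_right (abs_nonneg _) ((abs_rankOne_le y i).trans_eq ?_)
  simp [hy]

lemma specNorm_le {c : ℝ} (hc : 0 ≤ c)
    (h : ∀ x : Fin d → Fin k → ℝ, ‖tinner T (rankOne x)‖ ≤ c * ∏ j, vnorm (x j)) :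
    specNorm T ≤ c := by
  refine Real.sSup_le ?_ hc
  rintro _ ⟨x, hx, rfl⟩
  simpa [hx] using h x

lemma exists_fin_sum_rankOne_eq {ι : Type*} [Fintype ι] (x : ι → Fin d → Fin k → ℝ) :
    ∃ (r : ℕ) (y : Fin r → Fin d → Fin k → ℝ), ∑ a, rankOne (y a) = ∑ a, rankOne (x a) ∧
      ∑ a, ∏ j, vnorm (y a j) = ∑ a, ∏ j, vnorm (x a j) :=
  let e := Fintype.equivFin ι
  ⟨_, x ∘ e.symm, e.symm.sum_comp fun a => rankOne (x a),
    e.symm.sum_comp fun a => ∏ j, vnorm (x a j)⟩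

lemma nucNorm_le_of_eq_sum {ι : Type*} [Fintype ι] (x : ι → Fin d → Fin k → ℝ)
    (hT : T = ∑ a, rankOne (x a)) : nucNorm T ≤ ∑ a, ∏ j, vnorm (x a j) := by
  obtain ⟨r, y, hy, hcost⟩ := exists_fin_sum_rankOne_eq x
  rw [← hcost]
  refine csInf_le ⟨0, ?_⟩ ⟨r, y, hT.trans hy.symm, rfl⟩
  rintro _ ⟨_, z, -, rfl⟩
  exact sum_nonneg fun a _ => prod_nonneg fun j _ => vnorm_nonneg _

end Norms

section Slices

variable {k m : ℕ}

lemma sum_eq_sum_sum_cons {M : Type*} [AddCommMonoid M] (g : (Fin (m + 1) → Fin k) → M) :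
    ∑ i, g i = ∑ p : Fin m → Fin k, ∑ a, g (Fin.cons a p) := by
  rw [← Fintype.sum_equiv (Fin.consEquiv fun _ => Fin k) (fun q => g (Fin.cons q.1 q.2)) g
    fun _ => rfl, Fintype.sum_prod_type, sum_comm]

def slice (T : (Fin (m + 1) → Fin k) → ℝ) (p : Fin m → Fin k) : Fin k → ℝ :=
  fun a => T (Fin.cons a p)

/-- The factors of `x ⊗ e_{p₁} ⊗ ⋯ ⊗ e_{pₘ}`. -/
def consSingle (x : Fin k → ℝ) (p : Fin m → Fin k) : Fin (m + 1) → Fin k → ℝ :=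
  Fin.cons x fun j => Pi.single (p j) 1

lemma rankOne_consSingle (x : Fin k → ℝ) (p : Fin m → Fin k) (i : Fin (m + 1) → Fin k) :
    rankOne (consSingle x p) i = if Fin.tail i = p then x (i 0) else 0 := by
  simp only [rankOne, consSingle, Fin.prod_univ_succ, Fin.cons_zero, Fin.cons_succ,
    Pi.single_apply, Fintype.prod_boole, funext_iff, Fin.tail]
  split_ifs <;> simp

lemma prod_vnorm_consSingle (x : Fin k → ℝ) (p : Fin m → Fin k) :
    ∏ j, vnorm (consSingle x p j) = vnorm x := by
  simp [Fin.prod_univ_succ, consSingle, vnorm_single]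

lemma tinner_rankOne_consSingle (T : (Fin (m + 1) → Fin k) → ℝ) (x : Fin k → ℝ)
    (p : Fin m → Fin k) : tinner T (rankOne (consSingle x p)) = ∑ a, slice T p a * x a := by
  simp only [tinner_eq_sum, sum_eq_sum_sum_cons, rankOne_consSingle, Fin.tail_cons, Fin.cons_zero,
    mul_ite, mul_zero, slice]
  rw [sum_comm]
  simp

lemma sum_rankOne_consSingle_slice (T : (Fin (m + 1) → Fin k) → ℝ) :
    ∑ p, rankOne (consSingle (slice T p) p) = T := by
  ext i
  simp [Finset.sum_apply, rankOne_consSingle, slice, Fin.cons_self_tail]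

lemma sum_vnorm_slice_sq (T : (Fin (m + 1) → Fin k) → ℝ) :
    ∑ p, vnorm (slice T p) ^ 2 = hsNorm T ^ 2 := by
  simp only [vnorm_sq, hsNorm_sq, sum_eq_sum_sum_cons (fun i => T i ^ 2), slice]

lemma vnorm_slice_le_specNorm (T : (Fin (m + 1) → Fin k) → ℝ) (p : Fin m → Fin k) :
    vnorm (slice T p) ≤ specNorm T := by
  rcases (vnorm_nonneg (slice T p)).eq_or_lt with hv | hv
  · exact hv ▸ specNorm_nonneg T
  set v := vnorm (slice T p)
  have hx : ∀ j, vnorm (consSingle (v⁻¹ • slice T p) p j) = 1 := by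
    refine Fin.cases ?_ fun j => vnorm_single (p j)
    rw [consSingle, Fin.cons_zero, vnorm_smul, abs_of_pos (inv_pos.2 hv), inv_mul_cancel₀ hv.ne']
  have hval : tinner T (rankOne (consSingle (v⁻¹ • slice T p) p)) = v := by
    rw [tinner_rankOne_consSingle]
    calc ∑ a, slice T p a * (v⁻¹ • slice T p) a = v⁻¹ * v ^ 2 := by
          simp only [vnorm_sq, v, mul_sum, Pi.smul_apply, smul_eq_mul]
          exact sum_congr rfl fun a _ => by ring
      _ = v := by field_simp
  simpa [hval, abs_of_pos hv] using norm_tinner_le_specNorm T hx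

end Slices

section Bounds

variable {k m : ℕ} (T : (Fin (m + 1) → Fin k) → ℝ)

lemma hsNorm_le_sqrt_pow_mul_specNorm : hsNorm T ≤ √k ^ m * specNorm T := by
  refine le_of_sq_le_sq ?_ (mul_nonneg (by positivity) (specNorm_nonneg T))
  calc hsNorm T ^ 2 = ∑ p, vnorm (slice T p) ^ 2 := (sum_vnorm_slice_sq T).symm
    _ ≤ ∑ _p : Fin m → Fin k, specNorm T ^ 2 := by
        gcongr with p
        · exact vnorm_nonneg _
        · exact vnorm_slice_le_specNorm T p
    _ = (√k ^ m * specNorm T) ^ 2 := by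
        rw [mul_pow, ← pow_mul, mul_comm m, pow_mul, Real.sq_sqrt (Nat.cast_nonneg k)]
        simp

lemma inv_sqrt_pow_le_specNorm (hT : hsNorm T = 1) : (√k ^ m)⁻¹ ≤ specNorm T := by
  have h := hsNorm_le_sqrt_pow_mul_specNorm T
  rw [hT] at h
  have hpos := pos_of_mul_pos_left (one_pos.trans_le h) (specNorm_nonneg T)
  exact (inv_le_iff_one_le_mul₀' hpos).2 h

lemma nucNorm_le_sqrt_pow_mul_hsNorm : nucNorm T ≤ √k ^ m * hsNorm T := by
  refine (nucNorm_le_of_eq_sum T _ (sum_rankOne_consSingle_slice T).symm).trans ?_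
  simp only [prod_vnorm_consSingle]
  refine le_of_sq_le_sq ?_ (mul_nonneg (by positivity) (hsNorm_nonneg T))
  calc (∑ p, vnorm (slice T p)) ^ 2 ≤ (univ : Finset (Fin m → Fin k)).card *
        ∑ p, vnorm (slice T p) ^ 2 := sq_sum_le_card_mul_sum_sq
    _ = (√k ^ m * hsNorm T) ^ 2 := by
        rw [sum_vnorm_slice_sq, mul_pow, ← pow_mul, mul_comm m, pow_mul,
          Real.sq_sqrt (Nat.cast_nonneg k)]
        simp

lemma sq_hsNorm_le_mul_nucNorm {c : ℝ} (hc : 0 < c)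
    (h : ∀ x : Fin (m + 1) → Fin k → ℝ, ‖tinner T (rankOne x)‖ ≤ c * ∏ j, vnorm (x j)) :
    hsNorm T ^ 2 ≤ c * nucNorm T := by
  rw [← div_le_iff₀' hc]
  refine le_csInf ?_ ?_
  · obtain ⟨r, y, hy, -⟩ := exists_fin_sum_rankOne_eq fun p => consSingle (slice T p) p
    exact ⟨_, r, y, (hy.trans (sum_rankOne_consSingle_slice T)).symm, rfl⟩
  rintro _ ⟨r, x, hT, rfl⟩
  have hpair : tinner T T = ∑ a, tinner T (rankOne (x a)) := by
    rw [← tinner_sum]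
    exact congrArg (tinner T) hT
  rw [div_le_iff₀' hc, mul_sum, ← tinner_self, hpair]
  exact sum_le_sum fun a _ => (le_abs_self _).trans (h (x a))

end Bounds

section Tn1

open Complex

lemma sum_uvec_mul (x : Fin 2 → ℝ) :
    ∑ a, uvec a * x a = ((x 0 : ℂ) + x 1 * I) / (√2 : ℝ) := by
  simp only [uvec, Fin.sum_univ_two, Fin.isValue, ↓reduceIte, one_ne_zero, ite_mul]
  ring

lemma norm_sum_uvec_mul (x : Fin 2 → ℝ) : ‖∑ a, uvec a * x a‖ = vnorm x / √2 := by
  rw [sum_uvec_mul, norm_div, norm_add_mul_I, Complex.norm_real,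
    Real.norm_of_nonneg (by positivity)]
  simp [vnorm, Fin.sum_univ_two]

lemma tinner_Tn1_rankOne {n : ℕ} (x : Fin n → Fin 2 → ℝ) :
    tinner (Tn1 n) (rankOne x) = √2 * (∏ j, ∑ a, uvec a * x j a).re := by
  rw [tinner_eq_sum, Fintype.prod_sum, Complex.re_sum, mul_sum]
  refine sum_congr rfl fun i _ => ?_
  simp only [Tn1, rankOne, prod_mul_distrib, ← Complex.ofReal_prod, Complex.re_mul_ofReal]
  ring

lemma norm_tinner_Tn1_rankOne_le {m : ℕ} (x : Fin (m + 1) → Fin 2 → ℝ) :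
    ‖tinner (Tn1 (m + 1)) (rankOne x)‖ ≤ (√2 ^ m)⁻¹ * ∏ j, vnorm (x j) := by
  rw [tinner_Tn1_rankOne, norm_mul, Real.norm_of_nonneg (by positivity)]
  calc √2 * ‖(∏ j, ∑ a, uvec a * x j a).re‖ ≤ √2 * ‖∏ j, ∑ a, uvec a * x j a‖ := by
        gcongr
        exact Complex.abs_re_le_norm _
    _ = (√2 ^ m)⁻¹ * ∏ j, vnorm (x j) := by
        simp only [norm_prod, norm_sum_uvec_mul, prod_div_distrib, prod_const, card_univ,
          Fintype.card_fin]
        field_simp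
        ring

lemma two_mul_re_sq (z : ℂ) : 2 * z.re ^ 2 = normSq z + (z ^ 2).re := by
  rw [normSq_apply, sq, sq, Complex.mul_re]
  ring

lemma sum_normSq_uvec : ∑ a, normSq (uvec a) = 1 := by
  simp only [uvec, Fin.sum_univ_two, Fin.isValue, ↓reduceIte, one_ne_zero, map_mul, normSq_I,
    map_inv₀, normSq_ofReal, Real.mul_self_sqrt zero_le_two, one_mul]
  norm_num

lemma sum_uvec_sq : ∑ a, uvec a ^ 2 = 0 := by
  simp [Fin.sum_univ_two, uvec, mul_pow]

lemma hsNorm_Tn1 (m : ℕ) : hsNorm (Tn1 (m + 1)) = 1 := by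
  refine (pow_eq_one_iff_of_nonneg (hsNorm_nonneg _) two_ne_zero).1 ?_
  have hnormSq : ∑ i : Fin (m + 1) → Fin 2, normSq (∏ j, uvec (i j)) = 1 :=
    calc _ = ∏ _j : Fin (m + 1), ∑ a, normSq (uvec a) := by
          rw [Fintype.prod_sum]
          simp only [map_prod]
      _ = 1 := by rw [sum_normSq_uvec, prod_const_one]
  have hsq : ∑ i : Fin (m + 1) → Fin 2, ((∏ j, uvec (i j)) ^ 2).re = 0 :=
    calc _ = (∏ _j : Fin (m + 1), ∑ a, uvec a ^ 2).re := by
          rw [Fintype.prod_sum, Complex.re_sum]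
          simp only [prod_pow]
      _ = 0 := by
          rw [sum_uvec_sq]
          simp
  calc hsNorm (Tn1 (m + 1)) ^ 2
      = ∑ i : Fin (m + 1) → Fin 2, 2 * (∏ j, uvec (i j)).re ^ 2 := by
        simp only [hsNorm_sq, Tn1, mul_pow, Real.sq_sqrt zero_le_two]
    _ = 1 := by simp only [two_mul_re_sq, sum_add_distrib, hnormSq, hsq, add_zero]

lemma specNorm_Tn1 (m : ℕ) : specNorm (Tn1 (m + 1)) = (√2 ^ m)⁻¹ := by
  refine le_antisymm (specNorm_le _ (by positivity) norm_tinner_Tn1_rankOne_le) ?_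
  simpa using inv_sqrt_pow_le_specNorm _ (hsNorm_Tn1 m)

lemma nucNorm_Tn1 (m : ℕ) : nucNorm (Tn1 (m + 1)) = √2 ^ m := by
  refine le_antisymm ?_ ?_
  · simpa [hsNorm_Tn1] using nucNorm_le_sqrt_pow_mul_hsNorm (Tn1 (m + 1))
  · have h := sq_hsNorm_le_mul_nucNorm (Tn1 (m + 1)) (by positivity) norm_tinner_Tn1_rankOne_le
    rwa [hsNorm_Tn1, one_pow, le_inv_mul_iff₀ (by positivity), mul_one] at h

end Tn1

lemma two_rpow_div_two (m : ℕ) : (2 : ℝ) ^ ((m : ℝ) / 2) = √2 ^ m := by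
  rw [Real.sqrt_eq_rpow, ← Real.rpow_natCast, ← Real.rpow_mul zero_le_two]
  ring_nf

end RealTensor

open RealTensor in
/-- Every real `n`-qubit state `T` satisfies
`‖T‖_{∞,ℝ} ≥ 2^{(1-n)/2}` and `‖T‖_{1,ℝ} ≤ 2^{(n-1)/2}`, both attained by `T_{n,1}`;
in particular `α(2^{×n},ℝ) = 2^{(n-1)/2}` and `β(2^{×n},ℝ) = 2^{(1-n)/2}`. -/
theorem stmt18 (n : ℕ) (hn : 1 ≤ n) :
    (∀ T : (Fin n → Fin 2) → ℝ, hsNorm T = 1 →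
      (2 : ℝ) ^ ((1 - (n : ℝ)) / 2) ≤ specNorm T ∧
      nucNorm T ≤ (2 : ℝ) ^ (((n : ℝ) - 1) / 2)) ∧
    specNorm (Tn1 n) = (2 : ℝ) ^ ((1 - (n : ℝ)) / 2) ∧
    nucNorm (Tn1 n) = (2 : ℝ) ^ (((n : ℝ) - 1) / 2) ∧
    alphaN ℝ n 2 = (2 : ℝ) ^ (((n : ℝ) - 1) / 2) ∧
    betaN ℝ n 2 = (2 : ℝ) ^ ((1 - (n : ℝ)) / 2) := by
  obtain ⟨m, rfl⟩ := Nat.exists_eq_add_of_le' hn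
  have hpos : (2 : ℝ) ^ ((((m + 1 : ℕ) : ℝ) - 1) / 2) = √2 ^ m := by
    rw [← two_rpow_div_two]
    push_cast
    ring_nf
  have hneg : (2 : ℝ) ^ ((1 - ((m + 1 : ℕ) : ℝ)) / 2) = (√2 ^ m)⁻¹ := by
    rw [← hpos, ← Real.rpow_neg zero_le_two]
    ring_nf
  have hspec (T : (Fin (m + 1) → Fin 2) → ℝ) (hT : hsNorm T = 1) : (√2 ^ m)⁻¹ ≤ specNorm T := by
    simpa using inv_sqrt_pow_le_specNorm T hT
  have hnuc (T : (Fin (m + 1) → Fin 2) → ℝ) (hT : hsNorm T = 1) : nucNorm T ≤ √2 ^ m := by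
    simpa [hT] using nucNorm_le_sqrt_pow_mul_hsNorm T
  rw [hpos, hneg]
  refine ⟨fun T hT => ⟨hspec T hT, hnuc T hT⟩, specNorm_Tn1 m, nucNorm_Tn1 m, ?_, ?_⟩
  · exact IsGreatest.csSup_eq ⟨⟨Tn1 (m + 1), hsNorm_Tn1 m, (nucNorm_Tn1 m).symm⟩,
      fun _ ⟨T, hT, hr⟩ => hr ▸ hnuc T hT⟩
  · exact IsLeast.csInf_eq ⟨⟨Tn1 (m + 1), hsNorm_Tn1 m, (specNorm_Tn1 m).symm⟩,
      fun _ ⟨T, hT, hr⟩ => hr ▸ hspec T hT⟩
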